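/- arXiv:2604.16661 — 4 statements merged into one kernel-verified Lean document; each statement's English description precedes it below -/
import Mathlib

section
/- Posterior of the global shrinkage scale (Lemma 2, in integral form): Fix τ > 0 and let m(y,τ) = ∫_ℝ φ(y−μ) π(μ|τ) dμ be the Horseshoe marginal likelihood. Then for every y ∈ ℝ, m(y,τ) = (√2/π^{3/2}) · τ · Ψ(y,τ), where Ψ(y,τ) = (1/2) ∫₀¹ (1−u)^{−1/2} (1−(1−τ²)u)^{−1} e^{−y²u/2} du. Consequently, for any hyperprior density π(τ) on (0,∞), the posterior density of τ given Y = (Y_1,…,Y_n) (proportional to π(τ)·∏_{i=1}^n m(Y_i,τ)) is proportional, as a function of τ, to π(τ) · τⁿ · ∏_{i=1}^n Ψ(Y_i,τ). -/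
open MeasureTheory Filter
open scoped Classical

/-- Density of `N(0,s)`. -/
noncomputable def gauss (s x : ℝ) : ℝ :=
  (Real.sqrt (2 * Real.pi * s))⁻¹ * Real.exp (-x ^ 2 / (2 * s))

/-- Univariate Horseshoe prior density with global scale `τ`. -/
noncomputable def hs (τ θ : ℝ) : ℝ :=
  ∫ l in Set.Ioi (0 : ℝ), gauss (l ^ 2 * τ ^ 2) θ * ((2 / Real.pi) * (1 + l ^ 2)⁻¹)

/-- Horseshoe marginal likelihood `m(y,τ)`. -/
noncomputable def marg (y τ : ℝ) : ℝ :=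
  ∫ μ : ℝ, gauss 1 (y - μ) * hs τ μ

/-- `Ψ(y,τ)`, the Euler integral representation of `Φ₁(1,1,3/2,−y²/2,1−τ²)`. -/
noncomputable def Psi (y τ : ℝ) : ℝ :=
  (1 / 2) * ∫ u in Set.Ioo (0 : ℝ) 1,
    (1 - u) ^ (-(1 : ℝ) / 2) * (1 - (1 - τ ^ 2) * u)⁻¹ * Real.exp (-y ^ 2 * u / 2)

/-!
Conditionally on the local scale `λ`, the prior of `μ` is `N(0, λ²τ²)`, so by Fubini and the
convolution of Gaussian densities `m(y,τ)` is the average of the `N(0, 1 + λ²τ²)` density at `y`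
against the half-Cauchy density of `λ`. The substitution `u = κ(λ) = 1/(1 + λ²τ²)`, the
shrinkage coefficient, maps `(0,∞)` onto `(0,1)` and turns this average into `Ψ(y,τ)` up to
the factor `√2 τ / π^{3/2}`. The posterior statement multiplies `n` copies of this identity.
-/

open Real ProbabilityTheory

lemma gauss_eq_gaussianPDFReal {s : ℝ} (hs0 : 0 ≤ s) : gauss s = gaussianPDFReal 0 ⟨s, hs0⟩ := by
  ext x
  simp only [gauss, gaussianPDFReal, sub_zero]
  rfl

lemma gauss_nonneg (s x : ℝ) : 0 ≤ gauss s x := by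
  unfold gauss; positivity

lemma integrable_gauss {s : ℝ} (hs0 : 0 ≤ s) : Integrable (gauss s) := by
  rw [gauss_eq_gaussianPDFReal hs0]
  exact integrable_gaussianPDFReal 0 _

lemma measurable_uncurry_gauss : Measurable (Function.uncurry gauss) := by
  unfold Function.uncurry gauss
  fun_prop

lemma gauss_le_of_le {s t : ℝ} (hs0 : 0 < s) (hst : s ≤ t) (x : ℝ) :
    gauss t x ≤ (√(2 * π * s))⁻¹ := by
  unfold gauss
  have hexp : exp (-x ^ 2 / (2 * t)) ≤ 1 :=
    exp_le_one_iff.mpr (div_nonpos_of_nonpos_of_nonneg (by nlinarith) (by linarith))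
  have hsqrt : (√(2 * π * t))⁻¹ ≤ (√(2 * π * s))⁻¹ :=
    inv_anti₀ (by positivity) (sqrt_le_sqrt (by gcongr))
  calc (√(2 * π * t))⁻¹ * exp (-x ^ 2 / (2 * t)) ≤ (√(2 * π * t))⁻¹ * 1 := by gcongr
    _ ≤ (√(2 * π * s))⁻¹ := by rwa [mul_one]

lemma integrable_gauss_sub_mul_gauss {s t : ℝ} (hs0 : 0 < s) (ht : 0 ≤ t) (y : ℝ) :
    Integrable fun μ => gauss s (y - μ) * gauss t μ :=
  (integrable_gauss ht).bdd_mul (c := (√(2 * π * s))⁻¹)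
    (measurable_uncurry_gauss.comp
      (by fun_prop : Measurable fun μ => (s, y - μ))).aestronglyMeasurable
    (ae_of_all _ fun μ => by
      rw [Real.norm_of_nonneg (gauss_nonneg _ _)]; exact gauss_le_of_le hs0 le_rfl _)

theorem integral_gauss_sub_mul_gauss {s t : ℝ} (hs0 : 0 < s) (ht : 0 < t) (y : ℝ) :
    ∫ μ, gauss s (y - μ) * gauss t μ = gauss (s + t) y := by
  set a := (s + t) / (2 * s * t)
  set c := t * y / (s + t)
  have hsquare : ∀ μ : ℝ, -(y - μ) ^ 2 / (2 * s) + -μ ^ 2 / (2 * t)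
      = -y ^ 2 / (2 * (s + t)) + -a * (μ - c) ^ 2 := by
    intro μ; simp only [a, c]; field_simp; ring
  have hintegrand : ∀ μ, gauss s (y - μ) * gauss t μ
      = (√(2 * π * s))⁻¹ * (√(2 * π * t))⁻¹ * exp (-y ^ 2 / (2 * (s + t))) *
        exp (-a * (μ - c) ^ 2) := by
    intro μ
    rw [mul_assoc _ (exp _), ← exp_add, ← hsquare, exp_add]
    unfold gauss
    ring
  have hsqrt : √(π / a) = √(2 * π * s) * √(2 * π * t) / √(2 * π * (s + t)) := by
    rw [← sqrt_mul (by positivity), ← sqrt_div' _ (by positivity)]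
    congr 1
    simp only [a]
    field_simp
  simp_rw [hintegrand]
  rw [integral_const_mul, integral_sub_right_eq_self (fun μ => exp (-a * μ ^ 2)),
    integral_gaussian, hsqrt, gauss]
  have : √(2 * π * s) ≠ 0 := by positivity
  have : √(2 * π * t) ≠ 0 := by positivity
  field_simp

section Mixture

variable {ν : Measure ℝ} [SFinite ν] {w v : ℝ → ℝ} {s : ℝ}

lemma integrable_gauss_sub_mul_gauss_mixture (hw : Integrable w ν) (hv : Measurable v)
    (hv_pos : ∀ᵐ l ∂ν, 0 < v l) (hs0 : 0 < s) (y : ℝ) :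
    Integrable (fun p : ℝ × ℝ => gauss s (y - p.1) * (gauss (v p.2) p.1 * w p.2))
      (volume.prod ν) := by
  have hmeas : AEStronglyMeasurable
      (fun p : ℝ × ℝ => gauss s (y - p.1) * (gauss (v p.2) p.1 * w p.2)) (volume.prod ν) := by
    refine (Measurable.aestronglyMeasurable ?_).mul
      ((Measurable.aestronglyMeasurable ?_).mul hw.aestronglyMeasurable.comp_snd)
    · exact measurable_uncurry_gauss.comp (measurable_const.prodMk (by fun_prop))
    · exact measurable_uncurry_gauss.comp ((hv.comp measurable_snd).prodMk measurable_fst)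
  refine (integrable_prod_iff' hmeas).mpr ⟨?_, ?_⟩
  · filter_upwards [hv_pos] with l hl
    simpa only [mul_assoc] using
      (integrable_gauss_sub_mul_gauss hs0 hl.le y).mul_const (w l)
  · have hnorm : (fun l => ∫ μ, ‖gauss s (y - μ) * (gauss (v l) μ * w l)‖) =ᵐ[ν]
        fun l => gauss (s + v l) y * ‖w l‖ := by
      filter_upwards [hv_pos] with l hl
      simp_rw [norm_mul, Real.norm_of_nonneg (gauss_nonneg _ _), ← mul_assoc]
      rw [integral_mul_const, integral_gauss_sub_mul_gauss hs0 hl]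
    refine Integrable.congr ?_ hnorm.symm
    refine hw.norm.bdd_mul (c := (√(2 * π * s))⁻¹)
      (measurable_uncurry_gauss.comp ((by fun_prop : Measurable (s + v ·)).prodMk
        measurable_const)).aestronglyMeasurable ?_
    filter_upwards [hv_pos] with l hl
    rw [Real.norm_of_nonneg (gauss_nonneg _ _)]
    exact gauss_le_of_le hs0 (by linarith) y

theorem integral_gauss_sub_mul_integral_gauss (hw : Integrable w ν) (hv : Measurable v)
    (hv_pos : ∀ᵐ l ∂ν, 0 < v l) (hs0 : 0 < s) (y : ℝ) :
    ∫ μ, gauss s (y - μ) * ∫ l, gauss (v l) μ * w l ∂ν = ∫ l, gauss (s + v l) y * w l ∂ν := by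
  simp_rw [← integral_const_mul]
  rw [integral_integral_swap (integrable_gauss_sub_mul_gauss_mixture hw hv hv_pos hs0 y)]
  refine integral_congr_ae ?_
  filter_upwards [hv_pos] with l hl
  simp_rw [← mul_assoc]
  rw [integral_mul_const, integral_gauss_sub_mul_gauss hs0 hl]

end Mixture

lemma marg_eq_setIntegral_gauss {τ : ℝ} (hτ : τ ≠ 0) (y : ℝ) :
    marg y τ = ∫ l in Set.Ioi (0 : ℝ), gauss (1 + l ^ 2 * τ ^ 2) y * ((2 / π) * (1 + l ^ 2)⁻¹) :=
  integral_gauss_sub_mul_integral_gauss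
    ((integrable_inv_one_add_sq.const_mul _).restrict) (by fun_prop)
    ((ae_restrict_mem measurableSet_Ioi).mono fun l (hl : 0 < l) => by positivity) one_pos y

noncomputable def shrinkageCoeff (τ l : ℝ) : ℝ := (1 + l ^ 2 * τ ^ 2)⁻¹

section ShrinkageCoeff

variable {τ : ℝ}

lemma hasDerivAt_shrinkageCoeff (τ l : ℝ) :
    HasDerivAt (shrinkageCoeff τ) (-(2 * l * τ ^ 2) / (1 + l ^ 2 * τ ^ 2) ^ 2) l := by
  show HasDerivAt (fun l => (1 + l ^ 2 * τ ^ 2)⁻¹) _ l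
  refine ((((hasDerivAt_pow 2 l).mul_const (τ ^ 2)).const_add 1).fun_inv
    (by positivity)).congr_deriv ?_
  norm_num

lemma strictAntiOn_shrinkageCoeff (hτ : τ ≠ 0) : StrictAntiOn (shrinkageCoeff τ) (Set.Ici 0) :=
  fun a (ha : 0 ≤ a) b _ hab => by
    unfold shrinkageCoeff
    gcongr

lemma image_shrinkageCoeff_Ioi (hτ : τ ≠ 0) :
    shrinkageCoeff τ '' Set.Ioi 0 = Set.Ioo 0 1 := by
  ext u
  constructor
  · rintro ⟨l, hl : 0 < l, rfl⟩
    exact ⟨by unfold shrinkageCoeff; positivity,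
      inv_lt_one_of_one_lt₀ (lt_add_of_pos_right _ (by positivity))⟩
  · rintro ⟨hu0, hu1⟩
    have hq : 0 < (1 - u) / (u * τ ^ 2) := div_pos (by linarith) (by positivity)
    refine ⟨√((1 - u) / (u * τ ^ 2)), sqrt_pos.mpr hq, ?_⟩
    rw [shrinkageCoeff, sq_sqrt hq.le]
    field_simp
    ring

lemma one_sub_shrinkageCoeff (τ l : ℝ) :
    1 - shrinkageCoeff τ l = l ^ 2 * τ ^ 2 * shrinkageCoeff τ l := by
  unfold shrinkageCoeff
  field_simp
  ring

lemma one_sub_mul_shrinkageCoeff (τ l : ℝ) :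
    1 - (1 - τ ^ 2) * shrinkageCoeff τ l = τ ^ 2 * (1 + l ^ 2) * shrinkageCoeff τ l := by
  unfold shrinkageCoeff
  field_simp
  ring

lemma abs_deriv_mul_psi_integrand_shrinkageCoeff (hτ : 0 < τ) {l : ℝ} (hl : 0 < l) (y : ℝ) :
    |-(2 * l * τ ^ 2) / (1 + l ^ 2 * τ ^ 2) ^ 2| *
      ((1 - shrinkageCoeff τ l) ^ (-(1 : ℝ) / 2) * (1 - (1 - τ ^ 2) * shrinkageCoeff τ l)⁻¹ *
        exp (-y ^ 2 * shrinkageCoeff τ l / 2))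
      = π * √(2 * π) / τ * (gauss (1 + l ^ 2 * τ ^ 2) y * ((2 / π) * (1 + l ^ 2)⁻¹)) := by
  obtain ⟨r, hr, hr2⟩ : ∃ r, 0 < r ∧ r ^ 2 = 1 + l ^ 2 * τ ^ 2 :=
    ⟨√(1 + l ^ 2 * τ ^ 2), by positivity, sq_sqrt (by positivity)⟩
  have hκ : shrinkageCoeff τ l = (r ^ 2)⁻¹ := by rw [shrinkageCoeff, hr2]
  have hrpow : (1 - shrinkageCoeff τ l) ^ (-(1 : ℝ) / 2) = r / (l * τ) := by
    rw [one_sub_shrinkageCoeff, hκ, show l ^ 2 * τ ^ 2 * (r ^ 2)⁻¹ = (l * τ / r) ^ 2 by ring,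
      show -(1 : ℝ) / 2 = -(1 / 2) by ring, rpow_neg (by positivity), ← sqrt_eq_rpow,
      sqrt_sq (by positivity), inv_div]
  rw [hrpow, one_sub_mul_shrinkageCoeff, hκ, gauss, ← hr2,
    sqrt_mul (by positivity : (0 : ℝ) ≤ 2 * π) (r ^ 2), sqrt_sq hr.le, abs_div, abs_neg,
    abs_of_pos (by positivity), abs_of_pos (by positivity),
    show -y ^ 2 * (r ^ 2)⁻¹ / 2 = -y ^ 2 / (2 * r ^ 2) by ring]
  field_simp

end ShrinkageCoeff

lemma sqrt_two_div_pi_rpow_three_halves : √2 / π ^ ((3 : ℝ) / 2) = 2 / (π * √(2 * π)) := by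
  rw [show (3 : ℝ) / 2 = 1 + 1 / 2 by norm_num, rpow_add pi_pos, rpow_one, ← sqrt_eq_rpow,
    sqrt_mul zero_le_two]
  have : √2 ≠ 0 := by positivity
  have : √π ≠ 0 := by positivity
  field_simp
  rw [sq_sqrt zero_le_two]

theorem setIntegral_gauss_mul_halfCauchy_eq_Psi {τ : ℝ} (hτ : 0 < τ) (y : ℝ) :
    ∫ l in Set.Ioi (0 : ℝ), gauss (1 + l ^ 2 * τ ^ 2) y * ((2 / π) * (1 + l ^ 2)⁻¹)
      = √2 / π ^ ((3 : ℝ) / 2) * τ * Psi y τ := by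
  have hsubst : ∫ u in Set.Ioo (0 : ℝ) 1,
      (1 - u) ^ (-(1 : ℝ) / 2) * (1 - (1 - τ ^ 2) * u)⁻¹ * exp (-y ^ 2 * u / 2)
      = ∫ l in Set.Ioi (0 : ℝ),
          π * √(2 * π) / τ * (gauss (1 + l ^ 2 * τ ^ 2) y * ((2 / π) * (1 + l ^ 2)⁻¹)) := by
    rw [← image_shrinkageCoeff_Ioi hτ.ne', integral_image_eq_integral_abs_deriv_smul
      measurableSet_Ioi (fun l _ => (hasDerivAt_shrinkageCoeff τ l).hasDerivWithinAt)
      ((strictAntiOn_shrinkageCoeff hτ.ne').injOn.mono Set.Ioi_subset_Ici_self)]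
    exact setIntegral_congr_fun measurableSet_Ioi fun l hl =>
      abs_deriv_mul_psi_integrand_shrinkageCoeff hτ hl y
  rw [Psi, hsubst, integral_const_mul, sqrt_two_div_pi_rpow_three_halves]
  generalize ∫ l in Set.Ioi (0 : ℝ), gauss (1 + l ^ 2 * τ ^ 2) y * ((2 / π) * (1 + l ^ 2)⁻¹) = I
  have : √(2 * π) ≠ 0 := by positivity
  field_simp

theorem marg_eq_Psi {τ : ℝ} (hτ : 0 < τ) (y : ℝ) :
    marg y τ = √2 / π ^ ((3 : ℝ) / 2) * τ * Psi y τ := by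
  rw [marg_eq_setIntegral_gauss hτ.ne', setIntegral_gauss_mul_halfCauchy_eq_Psi hτ]

/-- Posterior of the global shrinkage scale (Lemma 2, in integral form). -/
theorem horseshoe_posterior_of_tau :
    (∀ τ : ℝ, 0 < τ → ∀ y : ℝ,
      marg y τ = Real.sqrt 2 / Real.pi ^ ((3 : ℝ) / 2) * τ * Psi y τ) ∧
    ∀ (n : ℕ) (Y : Fin n → ℝ) (πτ : ℝ → ℝ),
      ∃ C > (0 : ℝ), ∀ τ : ℝ, 0 < τ →
        πτ τ * ∏ i, marg (Y i) τ = C * (πτ τ * τ ^ n * ∏ i, Psi (Y i) τ) := by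
  refine ⟨fun τ hτ y => marg_eq_Psi hτ y, fun n Y πτ => ?_⟩
  refine ⟨(√2 / π ^ ((3 : ℝ) / 2)) ^ n, by positivity, fun τ hτ => ?_⟩
  simp_rw [marg_eq_Psi hτ, Finset.prod_mul_distrib, Finset.prod_const, Finset.card_univ,
    Fintype.card_fin]
  ring
end

section
/- Two-sided bound on the univariate Horseshoe density (Lemma A.1): For every fixed τ > 0 and every θ ≠ 0, the Horseshoe prior density satisfies (1/(2√(2π³) τ)) · log(1 + 4τ²/θ²) < π(θ|τ) < (1/(√(2π³) τ)) · log(1 + 2τ²/θ²). -/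
open MeasureTheory
open scoped Classical

/-!
Substituting `u = λ⁻²` turns the Horseshoe density into
`(√(2π³) τ)⁻¹ ∫₀^∞ e^{-a u} / (1 + u) du` with `a = θ² / (2τ²)`. On `u > 0` the kernel
`1 / (1 + u)` lies strictly between `(1 - e^{-2u}) / (2u)` and `(1 - e^{-u}) / u`, and against
`e^{-a u}` these two integrate, by Frullani's formula, to `½ log ((a + 2) / a)` and
`log ((a + 1) / a)`.
-/

open Real Set

theorem setIntegral_lt_setIntegral_of_forall_lt {X : Type*} [MeasurableSpace X] {μ : Measure X}
    {s : Set X} {f g : X → ℝ} (hms : MeasurableSet s) (hμs : μ s ≠ 0)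
    (hf : IntegrableOn f s μ) (hg : IntegrableOn g s μ) (hfg : ∀ x ∈ s, f x < g x) :
    ∫ x in s, f x ∂μ < ∫ x in s, g x ∂μ := by
  rw [← sub_pos, ← integral_sub hg hf, setIntegral_pos_iff_support_of_nonneg_ae
    ((ae_restrict_mem hms).mono fun x hx => (sub_pos.2 (hfg x hx)).le) (hg.sub hf)]
  refine (pos_iff_ne_zero.2 hμs).trans_le (measure_mono fun x hx => ⟨?_, hx⟩)
  exact (sub_pos.2 (hfg x hx)).ne'

theorem integral_Ioi_comp_inv_sq {E : Type*} [NormedAddCommGroup E] [NormedSpace ℝ E]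
    (g : ℝ → E) : ∫ l in Ioi 0, (2 * (l ^ 3)⁻¹) • g (l ^ 2)⁻¹ = ∫ u in Ioi 0, g u := by
  rw [← integral_comp_rpow_Ioi g (p := -2) (by norm_num)]
  refine setIntegral_congr_fun measurableSet_Ioi fun l (hl : 0 < l) => ?_
  norm_num [rpow_neg hl.le]

theorem hs_eq_mul_integral {τ : ℝ} (hτ : 0 < τ) (θ : ℝ) :
    hs τ θ = (√(2 * π ^ 3) * τ)⁻¹ *
      ∫ u in Ioi 0, exp (-(θ ^ 2 / (2 * τ ^ 2) * u)) / (1 + u) := by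
  have hsqrt : √(2 * π ^ 3) = π * √(2 * π) := by
    rw [show 2 * π ^ 3 = π ^ 2 * (2 * π) by ring, sqrt_mul (by positivity), sqrt_sq pi_pos.le]
  rw [← integral_Ioi_comp_inv_sq, ← integral_const_mul, hs]
  refine setIntegral_congr_fun measurableSet_Ioi fun l (hl : 0 < l) => ?_
  have hsqrt_l : √(2 * π * (l ^ 2 * τ ^ 2)) = √(2 * π) * (l * τ) := by
    rw [show 2 * π * (l ^ 2 * τ ^ 2) = 2 * π * (l * τ) ^ 2 by ring, sqrt_mul (by positivity),
      sqrt_sq (by positivity)]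
  have hexp : -θ ^ 2 / (2 * (l ^ 2 * τ ^ 2)) = -(θ ^ 2 / (2 * τ ^ 2) * (l ^ 2)⁻¹) := by
    field_simp
  rw [gauss, hsqrt_l, hexp, hsqrt, smul_eq_mul]
  field_simp
  ring

theorem one_sub_mul_exp_lt_one_add_mul_exp_neg {u : ℝ} (hu : 0 < u) :
    (1 - u) * exp u < (1 + u) * exp (-u) := by
  have hanti : StrictAntiOn (fun x => (1 - x) * exp x - (1 + x) * exp (-x)) (Ici 0) := by
    refine strictAntiOn_of_hasDerivWithinAt_neg (convex_Ici 0) (by fun_prop)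
      (f' := fun x => -(x * (exp x - exp (-x)))) (fun x _ => ?_) fun x hx => ?_
    · refine HasDerivAt.hasDerivWithinAt ?_
      refine ((((hasDerivAt_id x).const_sub 1).mul (hasDerivAt_exp x)).sub
        (((hasDerivAt_id x).const_add 1).mul (hasDerivAt_neg x).exp)).congr_deriv ?_
      simp only [id]; ring
    · rw [interior_Ici, mem_Ioi] at hx
      have : exp (-x) < exp x := exp_lt_exp.2 (by linarith)
      nlinarith
  simpa using hanti self_mem_Ici hu.le hu

theorem inv_one_add_lt_inv_mul_one_sub_exp_neg {u : ℝ} (hu : 0 < u) :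
    (1 + u)⁻¹ < u⁻¹ * (1 - exp (-u)) := by
  have : (u + 1) * exp (-u) < 1 := by
    simpa [← exp_add] using mul_lt_mul_of_pos_right (add_one_lt_exp hu.ne') (exp_pos (-u))
  rw [inv_lt_iff_one_lt_mul₀' (by positivity), inv_mul_eq_div, mul_div_assoc', lt_div_iff₀ hu]
  nlinarith

-- Equivalently `tanh u < u`.
theorem inv_mul_one_sub_exp_neg_two_mul_lt_inv_one_add {u : ℝ} (hu : 0 < u) :
    (2 * u)⁻¹ * (1 - exp (-(2 * u))) < (1 + u)⁻¹ := by
  have h : 1 - u < (1 + u) * exp (-(2 * u)) := by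
    have := mul_lt_mul_of_pos_right (one_sub_mul_exp_lt_one_add_mul_exp_neg hu) (exp_pos (-u))
    rwa [mul_assoc, mul_assoc, ← exp_add, ← exp_add, add_neg_cancel, exp_zero, mul_one,
      ← neg_add, ← two_mul] at this
  rw [inv_mul_lt_iff₀ (by positivity), ← div_eq_mul_inv, lt_div_iff₀ (by positivity)]
  linarith

theorem exp_neg_mul_div_one_add_lt {u : ℝ} (hu : 0 < u) (a : ℝ) :
    exp (-(a * u)) / (1 + u) < u⁻¹ * (exp (-(a * u)) - exp (-((a + 1) * u))) := by
  have h := mul_lt_mul_of_pos_left (inv_one_add_lt_inv_mul_one_sub_exp_neg hu) (exp_pos (-(a * u)))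
  rw [div_eq_mul_inv, show -((a + 1) * u) = -(a * u) + -u by ring, exp_add]
  linarith

theorem inv_two_mul_exp_neg_sub_lt_exp_neg_mul_div_one_add {u : ℝ} (hu : 0 < u) (a : ℝ) :
    2⁻¹ * (u⁻¹ * (exp (-(a * u)) - exp (-((a + 2) * u)))) < exp (-(a * u)) / (1 + u) := by
  have h := mul_lt_mul_of_pos_left (inv_mul_one_sub_exp_neg_two_mul_lt_inv_one_add hu)
    (exp_pos (-(a * u)))
  rw [div_eq_mul_inv, show -((a + 2) * u) = -(a * u) + -(2 * u) by ring, exp_add]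
  rw [mul_inv] at h
  linarith

theorem integrableOn_exp_neg_mul_div_one_add {a : ℝ} (ha : 0 < a) :
    IntegrableOn (fun u => exp (-(a * u)) / (1 + u)) (Ioi 0) := by
  have hexp : IntegrableOn (fun u => exp (-(a * u))) (Ioi 0) := by
    simpa only [neg_mul] using exp_neg_integrableOn_Ioi 0 ha
  refine hexp.mono' ?_ ?_
  · exact (ContinuousOn.div (by fun_prop) (by fun_prop) fun u (hu : 0 < u) => by positivity)
      |>.aestronglyMeasurable measurableSet_Ioi
  · filter_upwards [ae_restrict_mem measurableSet_Ioi] with u (hu : 0 < u)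
    rw [Real.norm_of_nonneg (by positivity)]
    exact div_le_self (exp_pos _).le (by linarith)

theorem integrableOn_inv_mul_exp_neg_sub_exp_neg {a b : ℝ} (ha : 0 < a) (hb : 0 < b) :
    IntegrableOn (fun u => u⁻¹ * (exp (-(a * u)) - exp (-(b * u)))) (Ioi 0) := by
  wlog hab : a ≤ b generalizing a b
  · refine (this hb ha (le_of_not_ge hab)).neg.congr_fun (fun u _ => ?_) measurableSet_Ioi
    simp only [Pi.neg_apply]; ring
  refine Integrable.mono' ((exp_neg_integrableOn_Ioi 0 ha).const_mul (b - a)) ?_ ?_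
  · exact (ContinuousOn.mul (continuousOn_inv₀.mono fun u hu => ne_of_gt hu)
      (by fun_prop)).aestronglyMeasurable measurableSet_Ioi
  · filter_upwards [ae_restrict_mem measurableSet_Ioi] with u (hu : 0 < u)
    have hexp_b : exp (-(b * u)) = exp (-(a * u)) * exp (-((b - a) * u)) := by
      rw [← exp_add]; ring_nf
    have hle : exp (-(b * u)) ≤ exp (-(a * u)) := exp_le_exp.2 (by nlinarith)
    have hge : 1 - (b - a) * u ≤ exp (-((b - a) * u)) := by
      linarith [add_one_le_exp (-((b - a) * u))]
    rw [norm_mul, norm_inv, Real.norm_of_nonneg hu.le, Real.norm_of_nonneg (by linarith),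
      inv_mul_le_iff₀ hu, neg_mul]
    nlinarith [exp_pos (-(a * u))]

theorem integral_inv_mul_exp_neg_sub_exp_neg {a b : ℝ} (ha : 0 < a) (hb : 0 < b) :
    ∫ u in Ioi 0, u⁻¹ * (exp (-(a * u)) - exp (-(b * u))) = log (b / a) := by
  have hcont : Continuous fun x => exp (-x) := by fun_prop
  have h := Frullani.integral_Ioi_eq (f := fun x => exp (-x)) (L := 1) (R := 0)
    (hcont.locallyIntegrable.locallyIntegrableOn _) ha hb ?_ ?_
    (integrableOn_inv_mul_exp_neg_sub_exp_neg ha hb)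
  · simpa using h
  · simpa using (hcont.tendsto 0).mono_left nhdsWithin_le_nhds
  · simpa using tendsto_exp_neg_atTop_nhds_zero

theorem half_log_add_two_div_lt_integral_exp_neg_mul_div_one_add {a : ℝ} (ha : 0 < a) :
    2⁻¹ * log ((a + 2) / a) < ∫ u in Ioi 0, exp (-(a * u)) / (1 + u) := by
  rw [← integral_inv_mul_exp_neg_sub_exp_neg ha (by positivity), ← integral_const_mul]
  exact setIntegral_lt_setIntegral_of_forall_lt measurableSet_Ioi (by simp)
    ((integrableOn_inv_mul_exp_neg_sub_exp_neg ha (by positivity)).const_mul _)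
    (integrableOn_exp_neg_mul_div_one_add ha)
    fun u hu => inv_two_mul_exp_neg_sub_lt_exp_neg_mul_div_one_add hu a

theorem integral_exp_neg_mul_div_one_add_lt_log_add_one_div {a : ℝ} (ha : 0 < a) :
    ∫ u in Ioi 0, exp (-(a * u)) / (1 + u) < log ((a + 1) / a) := by
  rw [← integral_inv_mul_exp_neg_sub_exp_neg ha (by positivity)]
  exact setIntegral_lt_setIntegral_of_forall_lt measurableSet_Ioi (by simp)
    (integrableOn_exp_neg_mul_div_one_add ha)
    (integrableOn_inv_mul_exp_neg_sub_exp_neg ha (by positivity))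
    fun u hu => exp_neg_mul_div_one_add_lt hu a

/-- Two-sided bound on the univariate Horseshoe density (Lemma A.1). -/
theorem horseshoe_density_two_sided_bound (τ : ℝ) (hτ : 0 < τ) (θ : ℝ) (hθ : θ ≠ 0) :
    (2 * Real.sqrt (2 * Real.pi ^ 3) * τ)⁻¹ * Real.log (1 + 4 * τ ^ 2 / θ ^ 2) < hs τ θ ∧
      hs τ θ < (Real.sqrt (2 * Real.pi ^ 3) * τ)⁻¹ * Real.log (1 + 2 * τ ^ 2 / θ ^ 2) := by
  rw [hs_eq_mul_integral hτ]
  have ha : 0 < θ ^ 2 / (2 * τ ^ 2) := by positivity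
  have hC : 0 < (√(2 * π ^ 3) * τ)⁻¹ := by positivity
  constructor
  · calc (2 * √(2 * π ^ 3) * τ)⁻¹ * log (1 + 4 * τ ^ 2 / θ ^ 2)
        = (√(2 * π ^ 3) * τ)⁻¹ *
          (2⁻¹ * log ((θ ^ 2 / (2 * τ ^ 2) + 2) / (θ ^ 2 / (2 * τ ^ 2)))) := by
          field_simp
          ring_nf
      _ < _ := mul_lt_mul_of_pos_left
          (half_log_add_two_div_lt_integral_exp_neg_mul_div_one_add ha) hC
  · calc _ < (√(2 * π ^ 3) * τ)⁻¹ * log ((θ ^ 2 / (2 * τ ^ 2) + 1) / (θ ^ 2 / (2 * τ ^ 2))) :=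
          mul_lt_mul_of_pos_left (integral_exp_neg_mul_div_one_add_lt_log_add_one_div ha) hC
      _ = _ := by
          field_simp
end

section
/- Exponential-integral representation of the Horseshoe density: For every τ > 0 and every θ ≠ 0, the Horseshoe prior density satisfies π(θ|τ) = (1/(√(2π³) τ)) · e^{θ²/(2τ²)} · E₁(θ²/(2τ²)), where E₁(z) = ∫_z^∞ e^{−t}/t dt is the exponential integral. -/
open MeasureTheory
open scoped Classical

/-- The exponential integral `E₁(z) = ∫_z^∞ e^{−t}/t dt`. -/
noncomputable def expInt (z : ℝ) : ℝ :=
  ∫ t in Set.Ioi z, Real.exp (-t) / t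

/-!
Substituting `y = λ⁻²` turns the scale mixture defining `π(θ|τ)` into the Laplace-type integral
`(π √(2π) τ)⁻¹ ∫₀^∞ e^{-zy} / (1 + y) dy` with `z = θ² / (2τ²)`; the shift `t = 1 + y` followed by
the rescaling `s = z t` identifies the latter integral with `e^z E₁(z)`.
-/

open Real Set

theorem integral_Ioi_comp_add_right {E : Type*} [NormedAddCommGroup E] [NormedSpace ℝ E]
    (g : ℝ → E) (a c : ℝ) : ∫ x in Ioi a, g (x + c) = ∫ x in Ioi (a + c), g x := by
  have hpre : (· + c) ⁻¹' Ioi (a + c) = Ioi a := by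
    ext x
    simp
  rw [← hpre]
  exact (measurePreserving_add_right volume c).setIntegral_preimage_emb
    (measurableEmbedding_addRight c) g _

theorem expInt_eq_integral_Ioi_one {z : ℝ} (hz : 0 < z) :
    expInt z = ∫ t in Ioi 1, exp (-(z * t)) / t := by
  have hscale := integral_comp_mul_left_Ioi' (fun s ↦ exp (-s) / s) 1 hz
  rw [mul_one] at hscale
  rw [expInt, ← hscale, smul_eq_mul, ← integral_const_mul]
  refine setIntegral_congr_fun measurableSet_Ioi fun t ht ↦ ?_
  have ht0 : (0 : ℝ) < t := one_pos.trans ht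
  field_simp

theorem integral_Ioi_exp_neg_mul_div_one_add {z : ℝ} (hz : 0 < z) :
    ∫ y in Ioi 0, exp (-(z * y)) / (1 + y) = exp z * expInt z := by
  have hshift := integral_Ioi_comp_add_right (fun t ↦ exp (-(z * t)) / t) 0 1
  rw [zero_add] at hshift
  rw [expInt_eq_integral_Ioi_one hz, ← hshift, ← integral_const_mul]
  refine setIntegral_congr_fun measurableSet_Ioi fun y _ ↦ ?_
  rw [← mul_div_assoc, ← exp_add, add_comm y 1]
  ring_nf

theorem gauss_sq_mul_sq {l τ : ℝ} (hl : 0 < l) (hτ : 0 < τ) (θ : ℝ) :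
    gauss (l ^ 2 * τ ^ 2) θ = (√(2 * π) * l * τ)⁻¹ * exp (-(θ ^ 2 / (2 * τ ^ 2) * (l ^ 2)⁻¹)) := by
  have hsqrt : √(2 * π * (l ^ 2 * τ ^ 2)) = √(2 * π) * l * τ := by
    rw [sqrt_mul (by positivity), show l ^ 2 * τ ^ 2 = (l * τ) ^ 2 by ring,
      sqrt_sq (by positivity), mul_assoc]
  rw [gauss, hsqrt]
  congr 2
  field_simp

theorem hs_eq_integral_Ioi_exp_neg_mul_div_one_add {τ : ℝ} (hτ : 0 < τ) (θ : ℝ) :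
    hs τ θ = (π * √(2 * π) * τ)⁻¹ *
      ∫ y in Ioi 0, exp (-(θ ^ 2 / (2 * τ ^ 2) * y)) / (1 + y) := by
  rw [← integral_comp_rpow_Ioi _ (show (-2 : ℝ) ≠ 0 by norm_num), hs, ← integral_const_mul]
  refine setIntegral_congr_fun measurableSet_Ioi fun l hl ↦ ?_
  have hl0 : (0 : ℝ) < l := hl
  have hpow (n : ℕ) : l ^ (-(n : ℝ)) = (l ^ n)⁻¹ := by rw [rpow_neg hl0.le, rpow_natCast]
  rw [show (-2 : ℝ) - 1 = -(3 : ℕ) by norm_num, show (-2 : ℝ) = -(2 : ℕ) by norm_num, hpow, hpow,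
    gauss_sq_mul_sq hl0 hτ, smul_eq_mul]
  field_simp
  norm_num
  ring

theorem sqrt_two_mul_pi_pow_three : √(2 * π ^ 3) = π * √(2 * π) := by
  rw [show 2 * π ^ 3 = π ^ 2 * (2 * π) by ring, sqrt_mul (by positivity), sqrt_sq pi_pos.le]

/-- Exponential-integral representation of the Horseshoe density. -/
theorem horseshoe_density_expInt_representation (τ : ℝ) (hτ : 0 < τ) (θ : ℝ) (hθ : θ ≠ 0) :
    hs τ θ = (Real.sqrt (2 * Real.pi ^ 3) * τ)⁻¹ * Real.exp (θ ^ 2 / (2 * τ ^ 2)) *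
      expInt (θ ^ 2 / (2 * τ ^ 2)) := by
  rw [hs_eq_integral_Ioi_exp_neg_mul_div_one_add hτ,
    integral_Ioi_exp_neg_mul_div_one_add (by positivity), sqrt_two_mul_pi_pow_three]
  ring
end

section
/- Sign of the truncated Gaussian cross term: Let Z ∼ N(0,1) with density φ. For every θ ∈ ℝ and every ζ > 0, E[ θZ · 1{|Z+θ| > ζ} ] = θ·( φ(ζ−θ) − φ(ζ+θ) ) ≥ 0, and the inequality is strict whenever θ ≠ 0. -/
open MeasureTheory
open scoped Classical

/-!
Since `x φ(x) = -φ'(x)`, the first moment of a centred Gaussian density `φ = φ_s` over a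
half-line is a boundary value of the density: `∫_a^∞ x φ = s φ(a)` and `∫_{-∞}^a x φ = -s φ(a)`.
The set `{|z + θ| > ζ}` is the disjoint union of `(-∞, -ζ - θ)` and `(ζ - θ, ∞)`, so by evenness
of `φ` the truncated moment is `s (φ(ζ - θ) - φ(ζ + θ))`, and since
`(ζ + θ)² - (ζ - θ)² = 4ζθ` this difference has the sign of `θ`.
-/

open Set Filter Topology Real

lemma gauss_neg (s x : ℝ) : gauss s (-x) = gauss s x := by
  simp only [gauss, neg_sq]

lemma hasDerivAt_gauss (s x : ℝ) : HasDerivAt (gauss s) (-(x / s) * gauss s x) x := by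
  have h : HasDerivAt (fun y ↦ -y ^ 2 / (2 * s)) (-(2 * x) / (2 * s)) x := by
    simpa using (hasDerivAt_pow 2 x).neg.div_const (2 * s)
  exact (h.exp.const_mul (√(2 * π * s))⁻¹).congr_deriv (by unfold gauss; ring)

lemma gauss_eq_mul_exp_neg_mul_sq (s x : ℝ) :
    gauss s x = (√(2 * π * s))⁻¹ * exp (-(2 * s)⁻¹ * x ^ 2) := by
  unfold gauss
  ring_nf

section Gauss

variable {s : ℝ}

lemma gauss_lt_gauss_iff (hs : 0 < s) {x y : ℝ} : gauss s x < gauss s y ↔ y ^ 2 < x ^ 2 := by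
  have hc : 0 < (√(2 * π * s))⁻¹ := by
    have : 0 < 2 * π * s := by positivity
    positivity
  simp only [gauss, mul_lt_mul_iff_right₀ hc, exp_lt_exp,
    div_lt_div_iff_of_pos_right (by positivity : (0 : ℝ) < 2 * s), neg_lt_neg_iff]

lemma tendsto_gauss_cocompact (hs : 0 < s) : Tendsto (gauss s) (cocompact ℝ) (𝓝 0) := by
  have h := (tendsto_rpow_abs_mul_exp_neg_mul_sq_cocompact
    (inv_pos.2 (by positivity : (0 : ℝ) < 2 * s)) 0).const_mul (√(2 * π * s))⁻¹
  simpa only [rpow_zero, one_mul, mul_zero, ← gauss_eq_mul_exp_neg_mul_sq] using h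

lemma integrable_mul_gauss (hs : 0 < s) : Integrable fun x ↦ x * gauss s x := by
  have h := (integrable_mul_exp_neg_mul_sq
    (inv_pos.2 (by positivity : (0 : ℝ) < 2 * s))).const_mul (√(2 * π * s))⁻¹
  refine h.congr (Eventually.of_forall fun x ↦ ?_)
  simp only [gauss_eq_mul_exp_neg_mul_sq]
  ring

lemma hasDerivAt_neg_mul_gauss (hs : 0 < s) (x : ℝ) :
    HasDerivAt (fun y ↦ -s * gauss s y) (x * gauss s x) x :=
  ((hasDerivAt_gauss s x).const_mul (-s)).congr_deriv (by field_simp)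

lemma integral_Ioi_mul_gauss (hs : 0 < s) (a : ℝ) :
    ∫ x in Ioi a, x * gauss s x = s * gauss s a := by
  rw [integral_Ioi_of_hasDerivAt_of_tendsto' (fun x _ ↦ hasDerivAt_neg_mul_gauss hs x)
    (integrable_mul_gauss hs).integrableOn
    (((tendsto_gauss_cocompact hs).mono_left atTop_le_cocompact).const_mul (-s))]
  ring

lemma integral_Iio_mul_gauss (hs : 0 < s) (a : ℝ) :
    ∫ x in Iio a, x * gauss s x = -(s * gauss s a) := by
  rw [← integral_Iic_eq_integral_Iio, integral_Iic_of_hasDerivAt_of_tendsto'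
    (fun x _ ↦ hasDerivAt_neg_mul_gauss hs x) (integrable_mul_gauss hs).integrableOn
    (((tendsto_gauss_cocompact hs).mono_left atBot_le_cocompact).const_mul (-s))]
  ring

end Gauss

lemma setOf_lt_abs_add_eq (ζ θ : ℝ) :
    {z : ℝ | ζ < |z + θ|} = Iio (-ζ - θ) ∪ Ioi (ζ - θ) := by
  ext z
  simp only [mem_ofPred_eq, mem_union, mem_Iio, mem_Ioi, lt_abs]
  constructor <;> rintro (h | h) <;> [right; left; right; left] <;> linarith

lemma integral_setOf_lt_abs_add_mul_gauss {s ζ : ℝ} (hs : 0 < s) (hζ : 0 ≤ ζ) (θ : ℝ) :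
    ∫ z in {z : ℝ | ζ < |z + θ|}, z * gauss s z = s * (gauss s (ζ - θ) - gauss s (ζ + θ)) := by
  have hdisj : Disjoint (Iio (-ζ - θ)) (Ioi (ζ - θ)) :=
    (Iic_disjoint_Ioi (by linarith)).mono_left Iio_subset_Iic_self
  rw [setOf_lt_abs_add_eq, setIntegral_union hdisj measurableSet_Ioi
    (integrable_mul_gauss hs).integrableOn (integrable_mul_gauss hs).integrableOn,
    integral_Iio_mul_gauss hs, integral_Ioi_mul_gauss hs, ← gauss_neg s (-ζ - θ)]
  ring_nf

lemma mul_gauss_sub_gauss_pos {s ζ θ : ℝ} (hs : 0 < s) (hζ : 0 < ζ) (hθ : θ ≠ 0) :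
    0 < θ * (gauss s (ζ - θ) - gauss s (ζ + θ)) := by
  rcases hθ.lt_or_gt with hθ | hθ
  · refine mul_pos_of_neg_of_neg hθ (sub_neg.2 ((gauss_lt_gauss_iff hs).2 ?_))
    nlinarith
  · refine mul_pos hθ (sub_pos.2 ((gauss_lt_gauss_iff hs).2 ?_))
    nlinarith

/-- Sign of the truncated Gaussian cross term. -/
theorem truncated_gaussian_cross_term_sign (θ ζ : ℝ) (hζ : 0 < ζ) :
    (∫ z in {z : ℝ | ζ < |z + θ|}, θ * z * gauss 1 z) =
      θ * (gauss 1 (ζ - θ) - gauss 1 (ζ + θ)) ∧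
    0 ≤ θ * (gauss 1 (ζ - θ) - gauss 1 (ζ + θ)) ∧
    (θ ≠ 0 → 0 < θ * (gauss 1 (ζ - θ) - gauss 1 (ζ + θ))) := by
  refine ⟨?_, ?_, mul_gauss_sub_gauss_pos one_pos hζ⟩
  · simp only [mul_assoc]
    rw [integral_const_mul, integral_setOf_lt_abs_add_mul_gauss one_pos hζ.le, one_mul]
  · rcases eq_or_ne θ 0 with rfl | hθ
    · rw [zero_mul]
    · exact (mul_gauss_sub_gauss_pos one_pos hζ hθ).le
end
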